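/- arXiv:2605.11128 — 4 statements merged into one kernel-verified Lean document; each statement's English description precedes it below -/
import Mathlib

section
/- Discrete validity–diversity trade-off: in the product geometric model, if P(V) ≥ 1 − ε for some ε ∈ (0,1), then Div(P) ≤ exp(−∑_{t=1}^{d} Δ_{v_t}(ln(1/ε))). -/
/-!
Conditioned on `V`, the product geometric law is the product of the truncated geometric laws
`p_{v_t, a_t}` with `a_t = v_t · ln (1/q_t)`, so its entropy is `∑ H_{v_t}(a_t)` and
`Div(P) = exp (−∑ Δ_{v_t}(a_t))`. Since `P(V) = ∏ (1 − q_t^{v_t}) ≥ 1 − ε`, each `q_t^{v_t} ≤ ε`,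
i.e. `a_t ≥ ln (1/ε)`. It remains that `H_v` is antitone on `[0, ∞)`: for `0 ≤ b ≤ a`, Gibbs'
inequality bounds `H_v(a)` by the cross entropy against `p_{v,b}`, which is
`(b/v) · mean(p_{v,a}) + ln Z_b` with `Z_b` the normalizer of `p_{v,b}`; as the mean of `p_{v,a}`
decreases in `a`, this is at most `(b/v) · mean(p_{v,b}) + ln Z_b = H_v(b)`.
-/

open Finset

/-- The tilted distribution `p_{v,a}` on `{0,…,v−1}`:
`p_{v,a}(i) = exp(−a·i/v) / ∑_{j<v} exp(−a·j/v)`. -/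
noncomputable def tiltedPMF (v : ℕ) (a : ℝ) (i : ℕ) : ℝ :=
  Real.exp (-a * i / v) / ∑ j ∈ Finset.range v, Real.exp (-a * j / v)

/-- Shannon entropy (natural log) of the tilted distribution. -/
noncomputable def tiltedEntropy (v : ℕ) (a : ℝ) : ℝ :=
  -∑ i ∈ Finset.range v, tiltedPMF v a i * Real.log (tiltedPMF v a i)

/-- Entropy loss `Δ_v(a) = ln v − H_v(a)` relative to the uniform distribution. -/
noncomputable def entropyLoss (v : ℕ) (a : ℝ) : ℝ :=
  Real.log v - tiltedEntropy v a

/-- Product geometric distribution on `ℕ^d`: `P(y) = ∏_t (1−q_t)·q_t^{y_t}`. -/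
noncomputable def geomProd {d : ℕ} (q : Fin d → ℝ) (y : Fin d → ℕ) : ℝ :=
  ∏ t, (1 - q t) * q t ^ (y t)

/-- The valid set `V = {y ∈ ℕ^d : y_t < v_t for every t}` as a finite set. -/
def validSet {d : ℕ} (v : Fin d → ℕ) : Finset (Fin d → ℕ) :=
  Fintype.piFinset fun t => Finset.range (v t)

/-- Total probability mass `P(V)` of the valid set. -/
noncomputable def validMass {d : ℕ} (q : Fin d → ℝ) (v : Fin d → ℕ) : ℝ :=
  ∑ y ∈ validSet v, geomProd q y

/-- Shannon entropy of the conditional distribution `P(·|V)`. -/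
noncomputable def condEntropy {d : ℕ} (q : Fin d → ℝ) (v : Fin d → ℕ) : ℝ :=
  -∑ y ∈ validSet v,
      (geomProd q y / validMass q v) * Real.log (geomProd q y / validMass q v)

/-- Diversity `Div(P) = exp(H(P(·|V))) / |V|`. -/
noncomputable def diversity {d : ℕ} (q : Fin d → ℝ) (v : Fin d → ℕ) : ℝ :=
  Real.exp (condEntropy q v) / (validSet v).card

open Real

theorem sum_mul_log_le_sum_mul_log_self {ι : Type*} {s : Finset ι} {p q : ι → ℝ}
    (hp : ∀ i ∈ s, 0 < p i) (hq : ∀ i ∈ s, 0 < q i) (hpq : ∑ i ∈ s, q i ≤ ∑ i ∈ s, p i) :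
    ∑ i ∈ s, p i * log (q i) ≤ ∑ i ∈ s, p i * log (p i) := by
  have hterm : ∀ i ∈ s, p i * log (q i) - p i * log (p i) ≤ q i - p i := fun i hi => calc
    p i * log (q i) - p i * log (p i) = p i * log (q i / p i) := by
      rw [← mul_sub, log_div (hq i hi).ne' (hp i hi).ne']
    _ ≤ p i * (q i / p i - 1) :=
      mul_le_mul_of_nonneg_left (log_le_sub_one_of_pos (div_pos (hq i hi) (hp i hi))) (hp i hi).le
    _ = q i - p i := by field_simp [(hp i hi).ne']
  have := sum_le_sum hterm
  rw [sum_sub_distrib, sum_sub_distrib] at this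
  linarith

theorem sum_mul_mul_sum_le_of_pairwise {ι : Type*} {s : Finset ι} {f x y : ι → ℝ}
    (h : ∀ i ∈ s, ∀ j ∈ s, (f i - f j) * (x i * y j - x j * y i) ≤ 0) :
    (∑ i ∈ s, f i * x i) * ∑ j ∈ s, y j ≤ (∑ i ∈ s, f i * y i) * ∑ j ∈ s, x j := by
  have hsymm : ∑ i ∈ s, ∑ j ∈ s, (f i - f j) * (x i * y j - x j * y i)
      = 2 * ((∑ i ∈ s, f i * x i) * ∑ j ∈ s, y j - (∑ i ∈ s, f i * y i) * ∑ j ∈ s, x j) := calc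
    _ = ∑ i ∈ s, ∑ j ∈ s, (f i * x i * y j - f i * y i * x j)
          + ∑ i ∈ s, ∑ j ∈ s, (f j * x j * y i - f j * y j * x i) := by
      rw [← sum_add_distrib]
      refine sum_congr rfl fun i _ => ?_
      rw [← sum_add_distrib]
      exact sum_congr rfl fun j _ => by ring
    _ = 2 * ∑ i ∈ s, ∑ j ∈ s, (f i * x i * y j - f i * y i * x j) := by
      rw [sum_comm (f := fun i j => f j * x j * y i - f j * y j * x i)]
      ring
    _ = _ := by simp only [sum_mul_sum, ← sum_sub_distrib, mul_assoc]
  have := sum_nonpos fun i hi => sum_nonpos fun j hj => h i hi j hj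
  linarith

noncomputable def tiltedNormalizer (v : ℕ) (a : ℝ) : ℝ :=
  ∑ j ∈ range v, exp (-a * j / v)

noncomputable def tiltedMean (v : ℕ) (a : ℝ) : ℝ :=
  ∑ i ∈ range v, tiltedPMF v a i * i

section Tilted

variable {v : ℕ}

theorem tiltedPMF_eq (a : ℝ) (i : ℕ) :
    tiltedPMF v a i = exp (-a * i / v) / tiltedNormalizer v a := rfl

theorem tiltedNormalizer_pos (hv : v ≠ 0) (a : ℝ) : 0 < tiltedNormalizer v a :=
  sum_pos (fun _ _ => exp_pos _) (nonempty_range_iff.mpr hv)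

theorem tiltedPMF_pos (hv : v ≠ 0) (a : ℝ) (i : ℕ) : 0 < tiltedPMF v a i :=
  div_pos (exp_pos _) (tiltedNormalizer_pos hv a)

theorem sum_tiltedPMF (hv : v ≠ 0) (a : ℝ) : ∑ i ∈ range v, tiltedPMF v a i = 1 := by
  simp only [tiltedPMF_eq, ← sum_div]
  exact div_self (tiltedNormalizer_pos hv a).ne'

theorem log_tiltedPMF (hv : v ≠ 0) (a : ℝ) (i : ℕ) :
    log (tiltedPMF v a i) = -a * i / v - log (tiltedNormalizer v a) := by
  rw [tiltedPMF_eq, log_div (exp_ne_zero _) (tiltedNormalizer_pos hv a).ne', log_exp]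

theorem sum_tiltedPMF_mul_log_tiltedPMF (hv : v ≠ 0) (a b : ℝ) :
    ∑ i ∈ range v, tiltedPMF v a i * log (tiltedPMF v b i)
      = -(b / v * tiltedMean v a) - log (tiltedNormalizer v b) := by
  simp only [log_tiltedPMF hv, tiltedMean, mul_sub, sum_sub_distrib, ← sum_mul,
    sum_tiltedPMF hv, mul_sum]
  congr 1
  · rw [← sum_neg_distrib]
    exact sum_congr rfl fun i _ => by ring
  · ring

theorem tiltedEntropy_eq (hv : v ≠ 0) (a : ℝ) :
    tiltedEntropy v a = a / v * tiltedMean v a + log (tiltedNormalizer v a) := by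
  rw [tiltedEntropy, sum_tiltedPMF_mul_log_tiltedPMF hv]
  ring

theorem tiltedMean_eq (a : ℝ) :
    tiltedMean v a = (∑ i ∈ range v, (i : ℝ) * exp (-a * i / v)) / tiltedNormalizer v a := by
  rw [tiltedMean, sum_div]
  exact sum_congr rfl fun i _ => by rw [tiltedPMF_eq]; ring

theorem tiltedMean_antitone (hv : v ≠ 0) : Antitone (tiltedMean v) := by
  intro b a hba
  rw [tiltedMean_eq, tiltedMean_eq,
    div_le_div_iff₀ (tiltedNormalizer_pos hv a) (tiltedNormalizer_pos hv b)]
  refine sum_mul_mul_sum_le_of_pairwise fun i _ j _ => ?_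
  -- the ratio of the two cross terms is `exp ((a - b) (j - i) / v)`
  rw [← exp_add, ← exp_add, mul_nonpos_iff]
  rcases le_total (i : ℝ) j with hij | hij
  · refine Or.inr ⟨by linarith, sub_nonneg.mpr (exp_le_exp.mpr ?_)⟩
    rw [← add_div, ← add_div]
    exact div_le_div_of_nonneg_right (by nlinarith) v.cast_nonneg
  · refine Or.inl ⟨by linarith, sub_nonpos.mpr (exp_le_exp.mpr ?_)⟩
    rw [← add_div, ← add_div]
    exact div_le_div_of_nonneg_right (by nlinarith) v.cast_nonneg

theorem tiltedEntropy_antitoneOn (hv : v ≠ 0) : AntitoneOn (tiltedEntropy v) (Set.Ici 0) := by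
  intro b hb a _ hba
  have hgibbs := sum_mul_log_le_sum_mul_log_self (s := range v) (fun i _ => tiltedPMF_pos hv a i)
    (fun i _ => tiltedPMF_pos hv b i) (by rw [sum_tiltedPMF hv, sum_tiltedPMF hv])
  rw [sum_tiltedPMF_mul_log_tiltedPMF hv, ← neg_neg (∑ i ∈ range v, _), ← tiltedEntropy] at hgibbs
  have hmean : b / v * tiltedMean v a ≤ b / v * tiltedMean v b :=
    mul_le_mul_of_nonneg_left (tiltedMean_antitone hv hba) (div_nonneg hb (Nat.cast_nonneg v))
  rw [tiltedEntropy_eq hv b]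
  linarith

theorem entropyLoss_monotoneOn (hv : v ≠ 0) : MonotoneOn (entropyLoss v) (Set.Ici 0) :=
  fun _ hb _ ha hba => sub_le_sub_left (tiltedEntropy_antitoneOn hv hb ha hba) _

end Tilted

section ProductEntropy

variable {ι : Type*} [Fintype ι] [DecidableEq ι] {κ : ι → Type*} {s : ∀ t, Finset (κ t)}
  {p : ∀ t, κ t → ℝ}

theorem sum_piFinset_prod_mul_apply (hp : ∀ t, ∑ i ∈ s t, p t i = 1) (u : ι) (g : κ u → ℝ) :
    ∑ y ∈ Fintype.piFinset s, (∏ t, p t (y t)) * g (y u) = ∑ i ∈ s u, p u i * g i := by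
  let p' : ∀ t, κ t → ℝ := Function.update p u fun i => p u i * g i
  have hprod : ∀ y : ∀ t, κ t, (∏ t, p t (y t)) * g (y u) = ∏ t, p' t (y t) := fun y => by
    have hrest : ∏ t ∈ univ.erase u, p' t (y t) = ∏ t ∈ univ.erase u, p t (y t) :=
      prod_congr rfl fun t ht => by simp only [p', Function.update_of_ne (ne_of_mem_erase ht)]
    rw [← mul_prod_erase univ _ (mem_univ u), ← mul_prod_erase univ _ (mem_univ u), hrest]
    simp only [p', Function.update_self]
    ring
  have hmarg : ∀ t, ∑ i ∈ s t, p' t i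
      = Function.update (fun _ => (1 : ℝ)) u (∑ i ∈ s u, p u i * g i) t := by
    intro t
    rcases eq_or_ne t u with rfl | htu
    · simp [p']
    · simp only [p', Function.update_of_ne htu, hp t]
  simp only [hprod, ← prod_univ_sum, hmarg, prod_update_of_mem (mem_univ u)]
  simp

theorem neg_sum_prod_mul_log_prod (hp : ∀ t, ∑ i ∈ s t, p t i = 1)
    (hp₀ : ∀ t, ∀ i ∈ s t, p t i ≠ 0) :
    -∑ y ∈ Fintype.piFinset s, (∏ t, p t (y t)) * log (∏ t, p t (y t))
      = ∑ t, -∑ i ∈ s t, p t i * log (p t i) := by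
  have hlog : ∀ y ∈ Fintype.piFinset s, log (∏ t, p t (y t)) = ∑ t, log (p t (y t)) :=
    fun y hy => log_prod fun t _ => hp₀ t _ (Fintype.mem_piFinset.mp hy t)
  rw [sum_congr rfl fun y hy => by rw [hlog y hy, mul_sum], sum_comm, sum_neg_distrib]
  exact congrArg _ (sum_congr rfl fun t _ => sum_piFinset_prod_mul_apply hp t fun i => log (p t i))

end ProductEntropy

section Geometric

theorem exp_neg_mul_log_inv_div {v : ℕ} (hv : v ≠ 0) {q : ℝ} (hq : 0 < q) (i : ℕ) :
    exp (-(v * log (1 / q)) * i / v) = q ^ i := by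
  have hv' : (v : ℝ) ≠ 0 := Nat.cast_ne_zero.mpr hv
  rw [show -(v * log (1 / q)) * i / v = i * log q by
    rw [one_div, log_inv]; field_simp, exp_nat_mul, exp_log hq]

theorem tiltedPMF_mul_log_inv {v : ℕ} (hv : v ≠ 0) {q : ℝ} (hq : 0 < q) (i : ℕ) :
    tiltedPMF v (v * log (1 / q)) i = q ^ i / ∑ j ∈ range v, q ^ j := by
  simp only [tiltedPMF, exp_neg_mul_log_inv_div hv hq]

variable {d : ℕ} {q : Fin d → ℝ} {v : Fin d → ℕ}

theorem validMass_eq_prod_mul_geom_sum (q : Fin d → ℝ) (v : Fin d → ℕ) :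
    validMass q v = ∏ t, (1 - q t) * ∑ j ∈ range (v t), q t ^ j := by
  simp only [mul_sum]
  exact (prod_univ_sum _ fun t j => (1 - q t) * q t ^ j).symm

theorem validMass_eq_prod (q : Fin d → ℝ) (v : Fin d → ℕ) :
    validMass q v = ∏ t, (1 - q t ^ v t) := by
  simp only [validMass_eq_prod_mul_geom_sum, mul_neg_geom_sum]

theorem pow_le_of_one_sub_le_validMass (hq : ∀ t, 0 ≤ q t ∧ q t ≤ 1) {ε : ℝ}
    (hval : 1 - ε ≤ validMass q v) (t : Fin d) : q t ^ v t ≤ ε := by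
  have hfactor : ∀ s, 0 ≤ 1 - q s ^ v s ∧ 1 - q s ^ v s ≤ 1 := fun s =>
    ⟨sub_nonneg.mpr (pow_le_one₀ (hq s).1 (hq s).2), sub_le_self _ (pow_nonneg (hq s).1 _)⟩
  have hle : validMass q v ≤ 1 - q t ^ v t := by
    rw [validMass_eq_prod, ← mul_prod_erase univ _ (mem_univ t)]
    exact mul_le_of_le_one_right (hfactor t).1
      (prod_le_one (fun s _ => (hfactor s).1) fun s _ => (hfactor s).2)
  linarith

theorem geomProd_div_validMass (hq : ∀ t, 0 < q t ∧ q t < 1) (hv : ∀ t, v t ≠ 0)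
    (y : Fin d → ℕ) :
    geomProd q y / validMass q v = ∏ t, tiltedPMF (v t) (v t * log (1 / q t)) (y t) := by
  rw [geomProd, validMass_eq_prod_mul_geom_sum, ← prod_div_distrib]
  refine prod_congr rfl fun t _ => ?_
  rw [tiltedPMF_mul_log_inv (hv t) (hq t).1, mul_div_mul_left _ _ (sub_ne_zero.mpr (hq t).2.ne')]

theorem condEntropy_eq_sum_tiltedEntropy (hq : ∀ t, 0 < q t ∧ q t < 1) (hv : ∀ t, v t ≠ 0) :
    condEntropy q v = ∑ t, tiltedEntropy (v t) (v t * log (1 / q t)) := by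
  simp only [condEntropy, geomProd_div_validMass hq hv, validSet]
  exact neg_sum_prod_mul_log_prod (fun t => sum_tiltedPMF (hv t) _)
    fun t i _ => (tiltedPMF_pos (hv t) _ i).ne'

theorem card_validSet (v : Fin d → ℕ) : (validSet v).card = ∏ t, v t := by
  simp [validSet]

theorem diversity_eq_exp_neg_sum_entropyLoss (hq : ∀ t, 0 < q t ∧ q t < 1)
    (hv : ∀ t, v t ≠ 0) :
    diversity q v = exp (-∑ t, entropyLoss (v t) (v t * log (1 / q t))) := by
  have hcard : (0 : ℝ) < ∏ t, (v t : ℝ) :=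
    prod_pos fun t _ => Nat.cast_pos.mpr (Nat.pos_of_ne_zero (hv t))
  rw [diversity, condEntropy_eq_sum_tiltedEntropy hq hv, card_validSet, Nat.cast_prod,
    ← exp_log hcard, ← exp_sub, log_prod fun t _ => Nat.cast_ne_zero.mpr (hv t)]
  simp only [entropyLoss, sum_sub_distrib]
  ring_nf

end Geometric

theorem diversity_le_of_validity_general (d : ℕ)
    (q : Fin d → ℝ) (hq : ∀ t, 0 < q t ∧ q t < 1)
    (v : Fin d → ℕ)
    (ε : ℝ) (hε : 0 < ε ∧ ε < 1)
    (hval : 1 - ε ≤ validMass q v) :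
    diversity q v ≤ Real.exp (-∑ t, entropyLoss (v t) (Real.log (1 / ε))) := by
  have hpow : ∀ t, q t ^ v t ≤ ε :=
    pow_le_of_one_sub_le_validMass (fun t => ⟨(hq t).1.le, (hq t).2.le⟩) hval
  have hv : ∀ t, v t ≠ 0 := fun t hvt => by
    have := hpow t
    rw [hvt, pow_zero] at this
    linarith
  have htilt : ∀ t, log (1 / ε) ≤ v t * log (1 / q t) := fun t => by
    rw [one_div, one_div, log_inv, log_inv, mul_neg, neg_le_neg_iff, ← log_pow]
    exact log_le_log (pow_pos (hq t).1 _) (hpow t)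
  have hL : 0 ≤ log (1 / ε) := log_nonneg (one_le_one_div hε.1 hε.2.le)
  rw [diversity_eq_exp_neg_sum_entropyLoss hq hv, exp_le_exp, neg_le_neg_iff]
  exact sum_le_sum fun t _ =>
    entropyLoss_monotoneOn (hv t) hL (hL.trans (htilt t)) (htilt t)

/-- Discrete validity–diversity trade-off: in the product geometric model, if
`P(V) ≥ 1 − ε` for some `ε ∈ (0,1)`, then
`Div(P) ≤ exp(−∑_{t=1}^d Δ_{v_t}(ln(1/ε)))`. -/
theorem diversity_le_of_validity (d : ℕ) (hd : 1 ≤ d)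
    (q : Fin d → ℝ) (hq : ∀ t, 0 < q t ∧ q t < 1)
    (v : Fin d → ℕ) (hv : ∀ t, 1 ≤ v t)
    (ε : ℝ) (hε : 0 < ε ∧ ε < 1)
    (hval : 1 - ε ≤ validMass q v) :
    diversity q v ≤ Real.exp (-∑ t, entropyLoss (v t) (Real.log (1 / ε))) :=
  diversity_le_of_validity_general d q hq v ε hε hval
end

section
/- Exact multiplicative decomposition of sequence precision: in the decoding setup, suppose Q_S(F_{t−1}) > 0 for every t ∈ {1,…,d}. Then F_d = V, and Prec_seq(S) = ∏_{t=1}^{d} α_t, where α_t = (∑_{y ∈ F_{t−1}} Q_S(y)·Prec_t(S; y_{<t})) / Q_S(F_{t−1}) is the Q_S-conditional expectation of the local precision at step t given the event F_{t−1}. -/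
open Finset

open scoped Classical

/-- The prefix `y_{<t}` (the first `t` tokens, 0-indexed) of a sequence `y ∈ 𝒱^d`. -/
def prefixOf {𝒱 : Type*} {d : ℕ} (y : Fin d → 𝒱) (t : Fin d) : Fin t.val → 𝒱 :=
  fun i => y ⟨i.val, i.isLt.trans t.isLt⟩

/-- The valid-token set `G(y_{<t})`: tokens `w` such that some completion of the prefix
followed by `w` lies in the valid set `V`. -/
noncomputable def validTokens {𝒱 : Type*} [Fintype 𝒱] {d : ℕ}
    (V : Finset (Fin d → 𝒱)) (t : Fin d) (p : Fin t.val → 𝒱) : Finset 𝒱 :=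
  Finset.univ.filter fun w => ∃ y ∈ V, prefixOf y t = p ∧ y t = w

/-- The induced distribution `Q_S` of a cutoff strategy `S`:
`Q_S(y) = ∏_t 1[y_t ∈ S_t(y_{<t})] / |S_t(y_{<t})|`. -/
noncomputable def QS {𝒱 : Type*} [Fintype 𝒱] {d : ℕ}
    (S : ∀ t : Fin d, (Fin t.val → 𝒱) → Finset 𝒱) (y : Fin d → 𝒱) : ℝ :=
  ∏ t, if y t ∈ S t (prefixOf y t) then (1 : ℝ) / (S t (prefixOf y t)).card else 0

/-- The event `F_k`: sequences whose first `k` tokens are all valid-preserving. -/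
noncomputable def Fevent {𝒱 : Type*} [Fintype 𝒱] {d : ℕ}
    (V : Finset (Fin d → 𝒱)) (k : ℕ) : Finset (Fin d → 𝒱) :=
  Finset.univ.filter fun y => ∀ t : Fin d, t.val < k → y t ∈ validTokens V t (prefixOf y t)

/-- Local precision `Prec_t(S; y_{<t}) = |S_t(y_{<t}) ∩ G(y_{<t})| / |S_t(y_{<t})|`. -/
noncomputable def localPrec {𝒱 : Type*} [Fintype 𝒱] {d : ℕ}
    (V : Finset (Fin d → 𝒱)) (S : ∀ t : Fin d, (Fin t.val → 𝒱) → Finset 𝒱)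
    (t : Fin d) (p : Fin t.val → 𝒱) : ℝ :=
  ((S t p ∩ validTokens V t p).card : ℝ) / ((S t p).card : ℝ)

section Aux

set_option linter.unusedSectionVars false

variable {𝒱 : Type*} [Fintype 𝒱] {d : ℕ}

/-- First `k` coordinates of a sequence. -/
def takeSeq (y : Fin d → 𝒱) (k : ℕ) (hk : k ≤ d) : Fin k → 𝒱 :=
  fun i => y (Fin.castLE hk i)

/-- Probability mass of the cylinder over a prefix of length `k`. -/
noncomputable def Pmass (S : ∀ t : Fin d, (Fin t.val → 𝒱) → Finset 𝒱)
    (k : ℕ) (hk : k ≤ d) (p : Fin k → 𝒱) : ℝ :=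
  ∏ t : Fin k,
    if p t ∈ S (Fin.castLE hk t) (fun i => p (Fin.castLE t.isLt.le i)) then
      (1 : ℝ) / (S (Fin.castLE hk t) (fun i => p (Fin.castLE t.isLt.le i))).card
    else 0

lemma QS_eq_Pmass (S : ∀ t : Fin d, (Fin t.val → 𝒱) → Finset 𝒱) (y : Fin d → 𝒱) :
    QS S y = Pmass S d le_rfl y := rfl

lemma snoc_lt {k : ℕ} (p : Fin k → 𝒱) (w : 𝒱) (i : Fin (k + 1)) (h : i.val < k) :
    (Fin.snoc p w : Fin (k + 1) → 𝒱) i = p ⟨i.val, h⟩ :=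
  Fin.snoc_castSucc (α := fun _ => 𝒱) (x := w) (p := p) (i := ⟨i.val, h⟩)

lemma snoc_eq_last {k : ℕ} (p : Fin k → 𝒱) (w : 𝒱) (i : Fin (k + 1)) (h : i.val = k) :
    (Fin.snoc p w : Fin (k + 1) → 𝒱) i = w := by
  have hi : i = Fin.last k := Fin.ext h
  rw [hi, Fin.snoc_last]

lemma fac_congr (S : ∀ t : Fin d, (Fin t.val → 𝒱) → Finset 𝒱) (tt : Fin d)
    (q₁ q₂ : Fin tt.val → 𝒱) (a₁ a₂ : 𝒱) (hq : q₁ = q₂) (ha : a₁ = a₂) :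
    (if a₁ ∈ S tt q₁ then (1 : ℝ) / (S tt q₁).card else 0) =
      (if a₂ ∈ S tt q₂ then (1 : ℝ) / (S tt q₂).card else 0) := by
  subst hq; subst ha; rfl

lemma Pmass_snoc (S : ∀ t : Fin d, (Fin t.val → 𝒱) → Finset 𝒱)
    (k : ℕ) (hk : k + 1 ≤ d) (p : Fin k → 𝒱) (w : 𝒱) :
    Pmass S (k + 1) hk (Fin.snoc p w) =
      Pmass S k (Nat.le_of_succ_le hk) p *
        (if w ∈ S ⟨k, hk⟩ p then (1 : ℝ) / (S ⟨k, hk⟩ p).card else 0) := by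
  unfold Pmass
  rw [Fin.prod_univ_castSucc]
  congr 1
  · refine Finset.prod_congr rfl fun t _ => ?_
    exact fac_congr S (Fin.castLE hk t.castSucc) _ _ _ _
      (funext fun i => snoc_lt p w _ (i.isLt.trans_le t.isLt.le))
      (Fin.snoc_castSucc (α := fun _ => 𝒱) (x := w) (p := p) (i := t))
  · exact fac_congr S (Fin.castLE hk (Fin.last k)) _ _ _ _
      (funext fun i => snoc_lt p w _ i.isLt)
      (Fin.snoc_last (α := fun _ => 𝒱) (x := w) (p := p))

/-- Sum of the one-step transition kernel over a subset `B` of tokens. -/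
lemma sum_fac (S : ∀ t : Fin d, (Fin t.val → 𝒱) → Finset 𝒱)
    (t : Fin d) (p : Fin t.val → 𝒱) (B : Finset 𝒱) :
    ∑ w ∈ B, (if w ∈ S t p then (1 : ℝ) / (S t p).card else 0) =
      ((B ∩ S t p).card : ℝ) / (S t p).card := by
  rw [Finset.sum_ite_mem, Finset.sum_const, nsmul_eq_mul, mul_one_div]

lemma sum_fac_univ (S : ∀ t : Fin d, (Fin t.val → 𝒱) → Finset 𝒱)
    (hS : ∀ (t : Fin d) (p : Fin t.val → 𝒱), (S t p).Nonempty)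
    (t : Fin d) (p : Fin t.val → 𝒱) :
    ∑ w : 𝒱, (if w ∈ S t p then (1 : ℝ) / (S t p).card else 0) = 1 := by
  rw [sum_fac, Finset.univ_inter, div_self]
  exact_mod_cast (hS t p).card_pos.ne'

lemma takeSeq_succ_eq_snoc_iff (y : Fin d → 𝒱) (k : ℕ) (hk : k + 1 ≤ d)
    (p : Fin k → 𝒱) (w : 𝒱) :
    takeSeq y (k + 1) hk = Fin.snoc p w ↔
      takeSeq y k (Nat.le_of_succ_le hk) = p ∧ y ⟨k, hk⟩ = w := by
  constructor
  · intro H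
    constructor
    · funext i
      have := congrFun H (Fin.castSucc i)
      rw [Fin.snoc_castSucc] at this
      exact this
    · have := congrFun H (Fin.last k)
      rw [Fin.snoc_last] at this
      exact this
  · rintro ⟨H1, H2⟩
    funext i
    rcases lt_or_eq_of_le (Nat.lt_succ_iff.mp i.isLt) with h | h
    · rw [snoc_lt p w i h]
      exact congrFun H1 ⟨i.val, h⟩
    · rw [snoc_eq_last p w i h]
      have hi : Fin.castLE hk i = (⟨k, hk⟩ : Fin d) := Fin.ext h
      show y (Fin.castLE hk i) = w
      rw [hi]; exact H2

/-- Mass of a cylinder equals the prefix probability. -/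
lemma cylMass (S : ∀ t : Fin d, (Fin t.val → 𝒱) → Finset 𝒱)
    (hS : ∀ (t : Fin d) (p : Fin t.val → 𝒱), (S t p).Nonempty) :
    ∀ (j k : ℕ) (hjk : k + j = d) (p : Fin k → 𝒱),
    ∑ y ∈ Finset.univ.filter (fun y => takeSeq y k (by omega) = p), QS S y
      = Pmass S k (by omega) p := by
  intro j
  induction j with
  | zero =>
    intro k hjk p
    have hkd : k = d := by omega
    subst hkd
    have hfilter : Finset.univ.filter (fun y : Fin k → 𝒱 => takeSeq y k (by omega) = p) = {p} := by
      ext y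
      simp only [Finset.mem_filter, Finset.mem_univ, true_and, Finset.mem_singleton]
      exact Iff.rfl
    rw [hfilter, Finset.sum_singleton]
    rfl
  | succ j ih =>
    intro k hjk p
    have hk1 : k + 1 ≤ d := by omega
    have hsplit : Finset.univ.filter (fun y : Fin d → 𝒱 => takeSeq y k (by omega) = p)
        = Finset.univ.biUnion (fun w : 𝒱 =>
            Finset.univ.filter (fun y => takeSeq y (k + 1) hk1 = Fin.snoc p w)) := by
      ext y
      simp only [Finset.mem_filter, Finset.mem_univ, true_and, Finset.mem_biUnion]
      constructor
      · intro h
        exact ⟨y ⟨k, hk1⟩, (takeSeq_succ_eq_snoc_iff y k hk1 p _).mpr ⟨h, rfl⟩⟩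
      · rintro ⟨w, hw⟩
        exact ((takeSeq_succ_eq_snoc_iff y k hk1 p w).mp hw).1
    have hdisj : ∀ w₁ ∈ (Finset.univ : Finset 𝒱), ∀ w₂ ∈ (Finset.univ : Finset 𝒱), w₁ ≠ w₂ →
        Disjoint (Finset.univ.filter (fun y : Fin d → 𝒱 => takeSeq y (k + 1) hk1 = Fin.snoc p w₁))
          (Finset.univ.filter (fun y => takeSeq y (k + 1) hk1 = Fin.snoc p w₂)) := by
      intro w₁ _ w₂ _ hne
      simp only [Finset.disjoint_left, Finset.mem_filter, Finset.mem_univ, true_and]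
      intro y h1 h2
      apply hne
      have e1 := ((takeSeq_succ_eq_snoc_iff y k hk1 p w₁).mp h1).2
      have e2 := ((takeSeq_succ_eq_snoc_iff y k hk1 p w₂).mp h2).2
      rw [← e1, ← e2]
    rw [hsplit, Finset.sum_biUnion hdisj]
    have h1 : ∀ w : 𝒱,
        ∑ y ∈ Finset.univ.filter (fun y => takeSeq y (k + 1) hk1 = Fin.snoc p w), QS S y
          = Pmass S (k + 1) hk1 (Fin.snoc p w) :=
      fun w => ih (k + 1) (by omega) (Fin.snoc p w)
    rw [Finset.sum_congr rfl (fun w _ => h1 w),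
      Finset.sum_congr rfl (fun w _ => Pmass_snoc S k hk1 p w),
      ← Finset.mul_sum, sum_fac_univ S hS ⟨k, hk1⟩ p, mul_one]

end Aux
section Aux2

set_option linter.unusedSectionVars false

variable {𝒱 : Type*} [Fintype 𝒱] {d : ℕ}

/-- Validity of a prefix: every token in it is valid-preserving. -/
def goodP (V : Finset (Fin d → 𝒱)) (k : ℕ) (hk : k ≤ d) (p : Fin k → 𝒱) : Prop :=
  ∀ t : Fin k, p t ∈ validTokens V (Fin.castLE hk t) (fun i => p (Fin.castLE t.isLt.le i))

lemma mem_Fevent_iff (V : Finset (Fin d → 𝒱)) (k : ℕ) (hk : k ≤ d) (y : Fin d → 𝒱) :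
    y ∈ Fevent V k ↔ goodP V k hk (takeSeq y k hk) := by
  simp only [Fevent, Finset.mem_filter, Finset.mem_univ, true_and]
  constructor
  · intro H t
    exact H (Fin.castLE hk t) t.isLt
  · intro H s hs
    exact H ⟨s.val, hs⟩

lemma Fevent_eq_filter (V : Finset (Fin d → 𝒱)) (k : ℕ) (hk : k ≤ d) :
    Fevent V k = Finset.univ.filter (fun y => goodP V k hk (takeSeq y k hk)) := by
  ext y
  simp only [Finset.mem_filter, Finset.mem_univ, true_and]
  exact mem_Fevent_iff V k hk y

/-- Grouping a sum over sequences by their length-`k` prefix. -/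
lemma sum_over_prefix (S : ∀ t : Fin d, (Fin t.val → 𝒱) → Finset 𝒱)
    (hS : ∀ (t : Fin d) (p : Fin t.val → 𝒱), (S t p).Nonempty)
    (k : ℕ) (hk : k ≤ d) (A : (Fin k → 𝒱) → Prop) (f : (Fin k → 𝒱) → ℝ) :
    ∑ y ∈ Finset.univ.filter (fun y => A (takeSeq y k hk)), QS S y * f (takeSeq y k hk)
      = ∑ p ∈ Finset.univ.filter A, Pmass S k hk p * f p := by
  have hsplit : Finset.univ.filter (fun y : Fin d → 𝒱 => A (takeSeq y k hk))
      = (Finset.univ.filter A).biUnion (fun p =>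
          Finset.univ.filter (fun y => takeSeq y k hk = p)) := by
    ext y
    simp only [Finset.mem_filter, Finset.mem_univ, true_and, Finset.mem_biUnion]
    constructor
    · intro h
      exact ⟨takeSeq y k hk, h, rfl⟩
    · rintro ⟨p, hp, rfl⟩
      exact hp
  have hdisj : ∀ p₁ ∈ Finset.univ.filter A, ∀ p₂ ∈ Finset.univ.filter A, p₁ ≠ p₂ →
      Disjoint (Finset.univ.filter (fun y : Fin d → 𝒱 => takeSeq y k hk = p₁))
        (Finset.univ.filter (fun y => takeSeq y k hk = p₂)) := by
    intro p₁ _ p₂ _ hne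
    simp only [Finset.disjoint_left, Finset.mem_filter, Finset.mem_univ, true_and]
    intro y h1 h2
    exact hne (h1 ▸ h2 ▸ rfl)
  rw [hsplit, Finset.sum_biUnion hdisj]
  refine Finset.sum_congr rfl fun p hp => ?_
  have : ∀ y ∈ Finset.univ.filter (fun y : Fin d → 𝒱 => takeSeq y k hk = p),
      QS S y * f (takeSeq y k hk) = QS S y * f p := by
    intro y hy
    rw [(Finset.mem_filter.mp hy).2]
  rw [Finset.sum_congr rfl this, ← Finset.sum_mul,
    cylMass S hS (d - k) k (by omega) p, mul_comm]

/-- Splitting a sum over length-`(k+1)` tuples into prefix and last coordinate. -/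
lemma sum_snoc (k : ℕ) (g : (Fin (k + 1) → 𝒱) → ℝ) :
    ∑ q : Fin (k + 1) → 𝒱, g q = ∑ p : Fin k → 𝒱, ∑ w : 𝒱, g (Fin.snoc p w) := by
  have hbij : Function.Bijective
      (fun pw : (Fin k → 𝒱) × 𝒱 => (Fin.snoc pw.1 pw.2 : Fin (k + 1) → 𝒱)) := by
    constructor
    · intro a b hab
      have h1 : a.1 = b.1 := by
        have := congrArg Fin.init hab
        simpa [Fin.init_snoc] using this
      have h2 : a.2 = b.2 := by
        have := congrFun hab (Fin.last k)
        simpa [Fin.snoc_last] using this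
      exact Prod.ext h1 h2
    · intro q
      exact ⟨(Fin.init q, q (Fin.last k)), Fin.snoc_init_self q⟩
  calc ∑ q : Fin (k + 1) → 𝒱, g q
      = ∑ pw : (Fin k → 𝒱) × 𝒱, g (Fin.snoc pw.1 pw.2) :=
        (Fintype.sum_bijective _ hbij _ _ (fun _ => rfl)).symm
    _ = ∑ p : Fin k → 𝒱, ∑ w : 𝒱, g (Fin.snoc p w) := Fintype.sum_prod_type _

lemma valid_congr (V : Finset (Fin d → 𝒱)) (tt : Fin d)
    (q₁ q₂ : Fin tt.val → 𝒱) (a₁ a₂ : 𝒱) (hq : q₁ = q₂) (ha : a₁ = a₂) :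
    a₁ ∈ validTokens V tt q₁ ↔ a₂ ∈ validTokens V tt q₂ := by
  subst hq; subst ha; rfl

lemma goodP_snoc (V : Finset (Fin d → 𝒱)) (k : ℕ) (hk : k + 1 ≤ d)
    (p : Fin k → 𝒱) (w : 𝒱) :
    goodP V (k + 1) hk (Fin.snoc p w) ↔
      goodP V k (Nat.le_of_succ_le hk) p ∧ w ∈ validTokens V ⟨k, hk⟩ p := by
  constructor
  · intro H
    constructor
    · intro t
      exact (valid_congr V (Fin.castLE hk t.castSucc) _ _ _ _
        (funext fun i => snoc_lt p w _ (i.isLt.trans_le t.isLt.le))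
        (Fin.snoc_castSucc (α := fun _ => 𝒱) (x := w) (p := p) (i := t))).mp
        (H (Fin.castSucc t))
    · exact (valid_congr V (Fin.castLE hk (Fin.last k)) _ _ _ _
        (funext fun i => snoc_lt p w _ i.isLt)
        (Fin.snoc_last (α := fun _ => 𝒱) (x := w) (p := p))).mp (H (Fin.last k))
  · rintro ⟨H1, H2⟩ t
    rcases lt_or_eq_of_le (Nat.lt_succ_iff.mp t.isLt) with h | h
    · exact (valid_congr V (Fin.castLE hk t) _ _ _ _
        (funext fun i => snoc_lt p w _ (i.isLt.trans h))
        (snoc_lt p w t h)).mpr (H1 ⟨t.val, h⟩)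
    · have ht : t = Fin.last k := Fin.ext h
      subst ht
      exact (valid_congr V (Fin.castLE hk (Fin.last k)) _ _ _ _
        (funext fun i => snoc_lt p w _ i.isLt)
        (Fin.snoc_last (α := fun _ => 𝒱) (x := w) (p := p))).mpr H2

end Aux2
section Aux3

set_option linter.unusedSectionVars false

variable {𝒱 : Type*} [Fintype 𝒱] {d : ℕ}

lemma localPrec_eq (V : Finset (Fin d → 𝒱)) (S : ∀ t : Fin d, (Fin t.val → 𝒱) → Finset 𝒱)
    (t : Fin d) (p : Fin t.val → 𝒱) :
    localPrec V S t p = ((validTokens V t p ∩ S t p).card : ℝ) / (S t p).card := by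
  rw [localPrec, Finset.inter_comm]

/-- One-step recursion: expected local precision over `F_k` gives the mass of `F_{k+1}`. -/
lemma step_lemma (V : Finset (Fin d → 𝒱)) (S : ∀ t : Fin d, (Fin t.val → 𝒱) → Finset 𝒱)
    (hS : ∀ (t : Fin d) (p : Fin t.val → 𝒱), (S t p).Nonempty) (t : Fin d) :
    ∑ y ∈ Fevent V t.val, QS S y * localPrec V S t (prefixOf y t)
      = ∑ y ∈ Fevent V (t.val + 1), QS S y := by
  have hk : t.val ≤ d := t.isLt.le
  have hk1 : t.val + 1 ≤ d := t.isLt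
  calc ∑ y ∈ Fevent V t.val, QS S y * localPrec V S t (prefixOf y t)
      = ∑ p ∈ Finset.univ.filter (goodP V t.val hk), Pmass S t.val hk p * localPrec V S t p := by
        rw [Fevent_eq_filter V t.val hk]
        exact sum_over_prefix S hS t.val hk (goodP V t.val hk) (fun p => localPrec V S t p)
    _ = ∑ q ∈ Finset.univ.filter (goodP V (t.val + 1) hk1), Pmass S (t.val + 1) hk1 q := by
        rw [Finset.sum_filter, Finset.sum_filter,
          sum_snoc t.val (fun q => if goodP V (t.val + 1) hk1 q then Pmass S (t.val + 1) hk1 q else 0)]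
        refine Finset.sum_congr rfl fun p _ => ?_
        by_cases hgood : goodP V t.val hk p
        · rw [if_pos hgood]
          have hcong : ∀ w : 𝒱,
              (if goodP V (t.val + 1) hk1 (Fin.snoc p w) then Pmass S (t.val + 1) hk1 (Fin.snoc p w) else 0)
              = (if w ∈ validTokens V t p then
                  Pmass S t.val hk p * (if w ∈ S t p then (1 : ℝ) / (S t p).card else 0) else 0) := by
            intro w
            by_cases hw : w ∈ validTokens V t p
            · rw [if_pos ((goodP_snoc V t.val hk1 p w).mpr ⟨hgood, hw⟩), if_pos hw,
                Pmass_snoc S t.val hk1 p w]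
            · rw [if_neg (fun hc => hw ((goodP_snoc V t.val hk1 p w).mp hc).2), if_neg hw]
          rw [Finset.sum_congr rfl (fun w _ => hcong w), Finset.sum_ite_mem, Finset.univ_inter,
            ← Finset.mul_sum, sum_fac S t p (validTokens V t p), ← localPrec_eq V S t p]
        · rw [if_neg hgood]
          have hzero : ∀ w : 𝒱,
              (if goodP V (t.val + 1) hk1 (Fin.snoc p w) then Pmass S (t.val + 1) hk1 (Fin.snoc p w) else 0) = 0 := by
            intro w
            exact if_neg (fun hc => hgood ((goodP_snoc V t.val hk1 p w).mp hc).1)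
          rw [Finset.sum_congr rfl (fun w _ => hzero w), Finset.sum_const_zero]
    _ = ∑ y ∈ Fevent V (t.val + 1), QS S y := by
        rw [Fevent_eq_filter V (t.val + 1) hk1]
        have h := sum_over_prefix S hS (t.val + 1) hk1 (goodP V (t.val + 1) hk1) (fun _ => 1)
        simpa using h.symm

lemma Fevent_d_eq (hd : 1 ≤ d) (V : Finset (Fin d → 𝒱)) : Fevent V d = V := by
  ext y
  simp only [Fevent, Finset.mem_filter, Finset.mem_univ, true_and]
  constructor
  · intro H
    have hlast := H ⟨d - 1, by omega⟩ (by omega)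
    simp only [validTokens, Finset.mem_filter, Finset.mem_univ, true_and] at hlast
    obtain ⟨z, hzV, hzpre, hzlast⟩ := hlast
    have hzy : z = y := by
      funext i
      rcases lt_or_eq_of_le (Nat.lt_succ_iff.mp (show i.val < (d - 1) + 1 by omega)) with h | h
      · exact congrFun hzpre ⟨i.val, h⟩
      · have hi : i = (⟨d - 1, by omega⟩ : Fin d) := Fin.ext h
        rw [hi]; exact hzlast
    rwa [← hzy]
  · intro hyV s _
    simp only [validTokens, Finset.mem_filter, Finset.mem_univ, true_and]
    exact ⟨y, hyV, rfl, rfl⟩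

lemma Fevent_zero (V : Finset (Fin d → 𝒱)) : Fevent V 0 = Finset.univ := by
  ext y; simp [Fevent]

lemma QS_total (S : ∀ t : Fin d, (Fin t.val → 𝒱) → Finset 𝒱)
    (hS : ∀ (t : Fin d) (p : Fin t.val → 𝒱), (S t p).Nonempty) :
    ∑ y : Fin d → 𝒱, QS S y = 1 := by
  have h := cylMass S hS d 0 (by omega) (fun i => i.elim0)
  have hfil : Finset.univ.filter
      (fun y : Fin d → 𝒱 => takeSeq y 0 (by omega) = fun i => i.elim0) = Finset.univ := by
    ext y
    simp only [Finset.mem_filter, Finset.mem_univ, true_and, iff_true]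
    funext i; exact i.elim0
  rw [hfil] at h
  rw [h]
  simp [Pmass]

end Aux3
/-- Exact multiplicative decomposition of sequence precision: if `Q_S(F_{t−1}) > 0` at
every step, then `F_d = V` and `Prec_seq(S) = Q_S(V) = ∏_t α_t`, where `α_t` is the
`Q_S`-conditional expectation of the local precision at step `t` given `F_{t−1}`. -/
theorem seqPrecision_eq_prod_alpha {𝒱 : Type*} [Fintype 𝒱] [Nonempty 𝒱]
    {d : ℕ} (hd : 1 ≤ d)
    (V : Finset (Fin d → 𝒱)) (hV : V.Nonempty)
    (S : ∀ t : Fin d, (Fin t.val → 𝒱) → Finset 𝒱)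
    (hS : ∀ (t : Fin d) (p : Fin t.val → 𝒱), (S t p).Nonempty)
    (hpos : ∀ t : Fin d, 0 < ∑ y ∈ Fevent V t.val, QS S y) :
    Fevent V d = V ∧
    ∑ y ∈ V, QS S y =
      ∏ t : Fin d,
        (∑ y ∈ Fevent V t.val, QS S y * localPrec V S t (prefixOf y t)) /
          (∑ y ∈ Fevent V t.val, QS S y) := by
  have hFd : Fevent V d = V := Fevent_d_eq hd V
  refine ⟨hFd, ?_⟩
  have hm0 : (∑ y ∈ Fevent V 0, QS S y) = 1 := by
    rw [Fevent_zero V]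
    exact QS_total S hS
  have hpos' : ∀ n, n < d → (∑ y ∈ Fevent V n, QS S y) ≠ 0 := fun n hn => (hpos ⟨n, hn⟩).ne'
  have hprod : ∏ t : Fin d,
      (∑ y ∈ Fevent V t.val, QS S y * localPrec V S t (prefixOf y t)) /
        (∑ y ∈ Fevent V t.val, QS S y)
      = ∏ t : Fin d,
        (fun n : ℕ => (∑ y ∈ Fevent V (n + 1), QS S y) / (∑ y ∈ Fevent V n, QS S y)) t.val := by
    refine Finset.prod_congr rfl fun t _ => ?_
    rw [step_lemma V S hS t]
  rw [hprod, Fin.prod_univ_eq_prod_range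
    (fun n : ℕ => (∑ y ∈ Fevent V (n + 1), QS S y) / (∑ y ∈ Fevent V n, QS S y)) d]
  have htel : ∀ n, n ≤ d → ∏ i ∈ Finset.range n,
      ((∑ y ∈ Fevent V (i + 1), QS S y) / (∑ y ∈ Fevent V i, QS S y))
      = (∑ y ∈ Fevent V n, QS S y) / (∑ y ∈ Fevent V 0, QS S y) := by
    intro n
    induction n with
    | zero =>
      intro _
      simp [hm0]
    | succ n ih =>
      intro hn
      rw [Finset.prod_range_succ, ih (by omega)]
      have h1 : (∑ y ∈ Fevent V n, QS S y) ≠ 0 := hpos' n (by omega)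
      have h0 : (∑ y ∈ Fevent V 0, QS S y) ≠ 0 := by rw [hm0]; norm_num
      field_simp
  rw [htel d le_rfl, hm0, div_one, hFd]
end

section
/- Exact multiplicative decomposition of sequence recall: in the decoding setup, suppose U_V(E_{t−1}) > 0 for every t ∈ {1,…,d}. Then Rec_seq(S) = ∏_{t=1}^{d} β_t, where β_t = (∑_{y ∈ V ∩ E_{t−1}} (1/|V|)·Rec_t(S; y_{<t})) / U_V(E_{t−1}) is the U_V-conditional expectation of the local recall at step t given the event E_{t−1}. -/
open Finset

open scoped Classical

/-- `y` begins with the length-`k` prefix `p`. -/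
def matchesPrefix {𝒱 : Type*} {d k : ℕ} (y : Fin d → 𝒱) (p : Fin k → 𝒱) : Prop :=
  ∀ (i : Fin d) (h : i.val < k), y i = p ⟨i.val, h⟩

/-- `N(p)`: the number of valid completions of the length-`k` prefix `p`, i.e. the number
of valid sequences beginning with `p`. -/
noncomputable def numValidCompletions {𝒱 : Type*} {d : ℕ}
    (V : Finset (Fin d → 𝒱)) (k : ℕ) (p : Fin k → 𝒱) : ℕ :=
  (V.filter fun y => matchesPrefix y p).card

/-- Local recall
`Rec_t(S; y_{<t}) = (∑_{w ∈ S_t(y_{<t}) ∩ G(y_{<t})} N(y_{<t}∘w)) / N(y_{<t})`. -/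
noncomputable def localRec {𝒱 : Type*} [Fintype 𝒱] {d : ℕ}
    (V : Finset (Fin d → 𝒱)) (S : ∀ t : Fin d, (Fin t.val → 𝒱) → Finset 𝒱)
    (t : Fin d) (p : Fin t.val → 𝒱) : ℝ :=
  (∑ w ∈ S t p ∩ validTokens V t p,
      (numValidCompletions V (t.val + 1) (Fin.snoc p w) : ℝ)) /
    (numValidCompletions V t.val p : ℝ)

/-- The event `E_k`: sequences whose first `k` tokens are all retained by the strategy. -/
noncomputable def Eevent {𝒱 : Type*} [Fintype 𝒱] {d : ℕ}
    (S : ∀ t : Fin d, (Fin t.val → 𝒱) → Finset 𝒱) (k : ℕ) : Finset (Fin d → 𝒱) :=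
  Finset.univ.filter fun y => ∀ t : Fin d, t.val < k → y t ∈ S t (prefixOf y t)

/-- The uniform distribution `U_V` on the valid set: `U_V(A) = |V ∩ A| / |V|`. -/
noncomputable def UV {𝒱 : Type*} [Fintype 𝒱] {d : ℕ}
    (V A : Finset (Fin d → 𝒱)) : ℝ :=
  ((V ∩ A).card : ℝ) / (V.card : ℝ)


set_option linter.unusedSectionVars false

section Aux

variable {𝒱 : Type*} [Fintype 𝒱] {d : ℕ}

lemma snoc_mk_lt {α : Type*} {n : ℕ} (p : Fin n → α) (w : α) {i : ℕ}
    (h : i < n + 1) (hlt : i < n) :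
    (Fin.snoc p w : Fin (n + 1) → α) ⟨i, h⟩ = p ⟨i, hlt⟩ := by
  have : (⟨i, h⟩ : Fin (n + 1)) = Fin.castSucc ⟨i, hlt⟩ := rfl
  rw [this, Fin.snoc_castSucc]

lemma snoc_mk_last {α : Type*} {n : ℕ} (p : Fin n → α) (w : α)
    (h : n < n + 1) : (Fin.snoc p w : Fin (n + 1) → α) ⟨n, h⟩ = w := by
  have : (⟨n, h⟩ : Fin (n + 1)) = Fin.last n := rfl
  rw [this, Fin.snoc_last]

lemma prefix_eq_iff {y z : Fin d → 𝒱} {t : Fin d} :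
    prefixOf y t = prefixOf z t ↔ ∀ i : Fin d, i.val < t.val → y i = z i := by
  constructor
  · intro h i hi
    have := congrFun h ⟨i.val, hi⟩
    simpa [prefixOf, Fin.eta] using this
  · intro h
    funext j
    exact h ⟨j.val, j.isLt.trans t.isLt⟩ j.isLt

lemma matches_iff {y : Fin d → 𝒱} {t : Fin d} {p : Fin t.val → 𝒱} :
    matchesPrefix y p ↔ prefixOf y t = p := by
  constructor
  · intro h
    funext j
    have := h ⟨j.val, j.isLt.trans t.isLt⟩ j.isLt
    simpa [prefixOf, Fin.eta] using this
  · intro h i hi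
    have := congrFun h ⟨i.val, hi⟩
    simpa [prefixOf, Fin.eta] using this

lemma matches_snoc {y : Fin d → 𝒱} {t : Fin d} {p : Fin t.val → 𝒱} {w : 𝒱} :
    matchesPrefix y (Fin.snoc p w : Fin (t.val + 1) → 𝒱) ↔
      prefixOf y t = p ∧ y t = w := by
  constructor
  · intro h
    constructor
    · funext j
      have := h ⟨j.val, j.isLt.trans t.isLt⟩ (Nat.lt_succ_of_lt j.isLt)
      rw [snoc_mk_lt p w _ j.isLt] at this
      simpa [prefixOf, Fin.eta] using this
    · have := h t (Nat.lt_succ_self _)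
      rwa [snoc_mk_last p w] at this
  · rintro ⟨hp, hw⟩ i hi
    rcases Nat.lt_or_ge i.val t.val with h1 | h1
    · rw [snoc_mk_lt p w hi h1]
      have := congrFun hp ⟨i.val, h1⟩
      simpa [prefixOf, Fin.eta] using this
    · have h2 : i.val = t.val := Nat.le_antisymm (Nat.lt_succ_iff.mp hi) h1
      have hit : i = t := Fin.ext h2
      subst hit
      rw [snoc_mk_last p w]
      exact hw

lemma mem_Eevent {S : ∀ t : Fin d, (Fin t.val → 𝒱) → Finset 𝒱} {k : ℕ}
    {y : Fin d → 𝒱} :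
    y ∈ Eevent S k ↔ ∀ t : Fin d, t.val < k → y t ∈ S t (prefixOf y t) := by
  simp [Eevent]

lemma prefixOf_congr_of_prefix_eq {y z : Fin d → 𝒱} {t s : Fin d}
    (h : prefixOf y t = prefixOf z t) (hs : s.val < t.val) :
    prefixOf y s = prefixOf z s := by
  funext j
  exact prefix_eq_iff.mp h ⟨j.val, j.isLt.trans s.isLt⟩ (j.isLt.trans hs)

lemma Eevent_congr_prefix {S : ∀ t : Fin d, (Fin t.val → 𝒱) → Finset 𝒱}
    {y z : Fin d → 𝒱} {t : Fin d} (h : prefixOf y t = prefixOf z t)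
    (hy : y ∈ Eevent S t.val) : z ∈ Eevent S t.val := by
  rw [mem_Eevent] at hy ⊢
  intro s hs
  have h1 : z s = y s := (prefix_eq_iff.mp h s hs).symm
  have h2 : prefixOf z s = prefixOf y s :=
    (prefixOf_congr_of_prefix_eq h hs).symm
  rw [h1, h2]
  exact hy s hs

lemma mem_Eevent_succ {S : ∀ t : Fin d, (Fin t.val → 𝒱) → Finset 𝒱}
    {y : Fin d → 𝒱} {t : Fin d} :
    y ∈ Eevent S (t.val + 1) ↔
      y ∈ Eevent S t.val ∧ y t ∈ S t (prefixOf y t) := by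
  rw [mem_Eevent, mem_Eevent]
  constructor
  · intro h
    exact ⟨fun s hs => h s (Nat.lt_succ_of_lt hs), h t (Nat.lt_succ_self _)⟩
  · rintro ⟨h1, h2⟩ s hs
    rcases Nat.lt_or_ge s.val t.val with h3 | h3
    · exact h1 s h3
    · have : s = t := Fin.ext (Nat.le_antisymm (Nat.lt_succ_iff.mp hs) h3)
      rw [this]; exact h2

lemma Eevent_succ_subset {S : ∀ t : Fin d, (Fin t.val → 𝒱) → Finset 𝒱}
    {t : Fin d} : Eevent S (t.val + 1) ⊆ Eevent S t.val := by
  intro y hy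
  exact (mem_Eevent_succ.mp hy).1

/-- The denominator of `localRec` equals the size of the prefix-fiber within `V ∩ E_t`. -/
lemma denom_card (V : Finset (Fin d → 𝒱)) (S : ∀ t : Fin d, (Fin t.val → 𝒱) → Finset 𝒱)
    (t : Fin d) {y : Fin d → 𝒱} (hy : y ∈ V ∩ Eevent S t.val) :
    ((V ∩ Eevent S t.val).filter fun z => prefixOf z t = prefixOf y t).card =
      numValidCompletions V t.val (prefixOf y t) := by
  rw [mem_inter] at hy
  unfold numValidCompletions
  congr 1
  ext z
  simp only [mem_filter, mem_inter]
  constructor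
  · rintro ⟨⟨h1, _⟩, h3⟩
    exact ⟨h1, matches_iff.mpr h3⟩
  · rintro ⟨h1, h2⟩
    have h2' := matches_iff.mp h2
    exact ⟨⟨h1, Eevent_congr_prefix h2'.symm hy.2⟩, h2'⟩

/-- The numerator of `localRec` equals the size of the prefix-fiber within `V ∩ E_{t+1}`. -/
lemma numer_card (V : Finset (Fin d → 𝒱)) (S : ∀ t : Fin d, (Fin t.val → 𝒱) → Finset 𝒱)
    (t : Fin d) {y : Fin d → 𝒱} (hy : y ∈ V ∩ Eevent S t.val) :
    ∑ w ∈ S t (prefixOf y t) ∩ validTokens V t (prefixOf y t),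
        (numValidCompletions V (t.val + 1) (Fin.snoc (prefixOf y t) w) : ℝ) =
      (((V ∩ Eevent S (t.val + 1)).filter fun z => prefixOf z t = prefixOf y t).card : ℝ) := by
  rw [mem_inter] at hy
  set p := prefixOf y t with hp
  have hfib : ((V ∩ Eevent S (t.val + 1)).filter fun z => prefixOf z t = p) =
      V.filter fun z => prefixOf z t = p ∧ z t ∈ S t p := by
    ext z
    simp only [mem_filter, mem_inter]
    constructor
    · rintro ⟨⟨h1, h2⟩, h3⟩
      have := (mem_Eevent_succ.mp h2).2
      rw [h3] at this
      exact ⟨h1, h3, this⟩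
    · rintro ⟨h1, h2, h3⟩
      refine ⟨⟨h1, mem_Eevent_succ.mpr ⟨Eevent_congr_prefix h2.symm hy.2, ?_⟩⟩, h2⟩
      rw [h2]; exact h3
  have hcard : (V.filter fun z => prefixOf z t = p ∧ z t ∈ S t p).card =
      ∑ w ∈ S t p, (V.filter fun z => prefixOf z t = p ∧ z t = w).card := by
    rw [Finset.card_eq_sum_card_fiberwise
      (f := fun z => z t) (t := S t p)
      (fun z hz => (mem_filter.mp hz).2.2)]
    refine Finset.sum_congr rfl fun w hw => ?_
    congr 1
    rw [Finset.filter_filter]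
    apply Finset.filter_congr
    intro z _
    constructor
    · rintro ⟨⟨h1, _⟩, h2⟩; exact ⟨h1, h2⟩
    · rintro ⟨h1, h2⟩; exact ⟨⟨h1, h2 ▸ hw⟩, h2⟩
  have hterm : ∀ w : 𝒱, (V.filter fun z => prefixOf z t = p ∧ z t = w).card =
      numValidCompletions V (t.val + 1) (Fin.snoc p w) := by
    intro w
    unfold numValidCompletions
    congr 1
    apply Finset.filter_congr
    intro z _
    exact matches_snoc.symm
  have hext : ∑ w ∈ S t p ∩ validTokens V t p,
      (numValidCompletions V (t.val + 1) (Fin.snoc p w) : ℝ) =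
      ∑ w ∈ S t p, (numValidCompletions V (t.val + 1) (Fin.snoc p w) : ℝ) := by
    apply Finset.sum_subset Finset.inter_subset_left
    intro w hw hnw
    have hwG : w ∉ validTokens V t p := fun h => hnw (mem_inter.mpr ⟨hw, h⟩)
    have : numValidCompletions V (t.val + 1) (Fin.snoc p w) = 0 := by
      unfold numValidCompletions
      rw [Finset.card_eq_zero, Finset.filter_eq_empty_iff]
      intro z hz hm
      have hzz := matches_snoc.mp hm
      exact hwG (by simp only [validTokens, mem_filter, mem_univ, true_and]
                    exact ⟨z, hz, hzz.1, hzz.2⟩)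
    simp [this]
  rw [hext, hfib, hcard]
  push_cast
  exact Finset.sum_congr rfl fun w _ => by rw [hterm w]

lemma localRec_eq (V : Finset (Fin d → 𝒱)) (S : ∀ t : Fin d, (Fin t.val → 𝒱) → Finset 𝒱)
    (t : Fin d) {y : Fin d → 𝒱} (hy : y ∈ V ∩ Eevent S t.val) :
    localRec V S t (prefixOf y t) =
      (((V ∩ Eevent S (t.val + 1)).filter fun z => prefixOf z t = prefixOf y t).card : ℝ) /
      (((V ∩ Eevent S t.val).filter fun z => prefixOf z t = prefixOf y t).card : ℝ) := by
  unfold localRec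
  rw [numer_card V S t hy, denom_card V S t hy]

lemma sum_localRec (V : Finset (Fin d → 𝒱)) (S : ∀ t : Fin d, (Fin t.val → 𝒱) → Finset 𝒱)
    (t : Fin d) :
    ∑ y ∈ V ∩ Eevent S t.val, localRec V S t (prefixOf y t) =
      ((V ∩ Eevent S (t.val + 1)).card : ℝ) := by
  set T := V ∩ Eevent S t.val with hT
  set T' := V ∩ Eevent S (t.val + 1) with hT'
  have hsub : T' ⊆ T := Finset.inter_subset_inter le_rfl Eevent_succ_subset
  have h1 : ∀ y ∈ T, localRec V S t (prefixOf y t) =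
      ((T'.filter fun z => prefixOf z t = prefixOf y t).card : ℝ) /
      ((T.filter fun z => prefixOf z t = prefixOf y t).card : ℝ) :=
    fun y hy => localRec_eq V S t hy
  rw [Finset.sum_congr rfl h1]
  have h2 : ∀ y ∈ T, ((T'.filter fun z => prefixOf z t = prefixOf y t).card : ℝ) /
      ((T.filter fun z => prefixOf z t = prefixOf y t).card : ℝ) =
      ∑ z ∈ T', if prefixOf z t = prefixOf y t then
        (1 : ℝ) / ((T.filter fun u => prefixOf u t = prefixOf y t).card : ℝ) else 0 := by
    intro y hy
    rw [← Finset.sum_filter, Finset.sum_const, nsmul_eq_mul, mul_one_div]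
  rw [Finset.sum_congr rfl h2, Finset.sum_comm]
  have h3 : ∀ z ∈ T', (∑ y ∈ T, if prefixOf z t = prefixOf y t then
      (1 : ℝ) / ((T.filter fun u => prefixOf u t = prefixOf y t).card : ℝ) else 0) = 1 := by
    intro z hz
    have h4 : ∀ y ∈ T, (if prefixOf z t = prefixOf y t then
        (1 : ℝ) / ((T.filter fun u => prefixOf u t = prefixOf y t).card : ℝ) else 0) =
        (if prefixOf z t = prefixOf y t then
        (1 : ℝ) / ((T.filter fun u => prefixOf u t = prefixOf z t).card : ℝ) else 0) := by
      intro y _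
      by_cases h : prefixOf z t = prefixOf y t
      · simp only [h, if_true]
      · simp [h]
    rw [Finset.sum_congr rfl h4, ← Finset.sum_filter, Finset.sum_const, nsmul_eq_mul,
      mul_one_div]
    have hzT : z ∈ T := hsub hz
    have hcardpos : 0 < (T.filter fun u => prefixOf u t = prefixOf z t).card := by
      rw [Finset.card_pos]
      exact ⟨z, Finset.mem_filter.mpr ⟨hzT, rfl⟩⟩
    have heq : (T.filter fun y => prefixOf z t = prefixOf y t) =
        (T.filter fun u => prefixOf u t = prefixOf z t) := by
      apply Finset.filter_congr
      intro u _
      exact eq_comm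
    rw [heq, div_self (by exact_mod_cast hcardpos.ne')]
  rw [Finset.sum_congr rfl h3]
  simp

end Aux

/-- Exact multiplicative decomposition of sequence recall: if `U_V(E_{t−1}) > 0` at
every step, then `Rec_seq(S) = U_V(E_d) = ∏_t β_t`, where `β_t` is the `U_V`-conditional
expectation of the local recall at step `t` given `E_{t−1}`. -/
theorem seqRecall_eq_prod_beta {𝒱 : Type*} [Fintype 𝒱] [Nonempty 𝒱]
    {d : ℕ} (hd : 1 ≤ d)
    (V : Finset (Fin d → 𝒱)) (hV : V.Nonempty)
    (S : ∀ t : Fin d, (Fin t.val → 𝒱) → Finset 𝒱)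
    (hS : ∀ (t : Fin d) (p : Fin t.val → 𝒱), (S t p).Nonempty)
    (hpos : ∀ t : Fin d, 0 < UV V (Eevent S t.val)) :
    UV V (Eevent S d) =
      ∏ t : Fin d,
        (∑ y ∈ V ∩ Eevent S t.val,
            (1 / (V.card : ℝ)) * localRec V S t (prefixOf y t)) /
          UV V (Eevent S t.val) := by
  have hVcard : (0 : ℝ) < (V.card : ℝ) := by
    exact_mod_cast Finset.card_pos.mpr hV
  set f : ℕ → ℝ := fun n => UV V (Eevent S n) with hf
  have hbeta : ∀ t : Fin d,
      (∑ y ∈ V ∩ Eevent S t.val, (1 / (V.card : ℝ)) * localRec V S t (prefixOf y t)) /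
        UV V (Eevent S t.val) = f (t.val + 1) / f t.val := by
    intro t
    have hnum : ∑ y ∈ V ∩ Eevent S t.val,
        (1 / (V.card : ℝ)) * localRec V S t (prefixOf y t) = f (t.val + 1) := by
      rw [← Finset.mul_sum, sum_localRec]
      simp only [hf, UV]
      rw [one_div, inv_mul_eq_div]
    rw [hnum]
  rw [Finset.prod_congr rfl (fun t _ => hbeta t)]
  have hrange : ∏ t : Fin d, f (t.val + 1) / f t.val =
      ∏ i ∈ Finset.range d, f (i + 1) / f i :=
    Fin.prod_univ_eq_prod_range (fun n => f (n + 1) / f n) d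
  rw [hrange]
  have hne : ∀ n, n < d → f n ≠ 0 := fun n hn => (hpos ⟨n, hn⟩).ne'
  have f0 : f 0 = 1 := by
    have hE : Eevent S 0 = (Finset.univ : Finset (Fin d → 𝒱)) := by
      ext y; simp [Eevent]
    simp only [hf, UV, hE, Finset.inter_univ]
    exact div_self hVcard.ne'
  have tele : ∀ n, n ≤ d → ∏ i ∈ Finset.range n, f (i + 1) / f i = f n := by
    intro n
    induction n with
    | zero => intro _; simp [f0]
    | succ m ih =>
      intro hm
      rw [Finset.prod_range_succ, ih (Nat.le_of_succ_le hm), mul_comm,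
        div_mul_cancel₀ _ (hne m (Nat.lt_of_succ_le hm))]
  rw [tele d le_rfl]
end

section
/- Compounding effect of hard decoding steps: in the decoding setup, let δ ∈ (0,1), η > 0, ρ > 0, and m ∈ ℕ. Assume U_V(E_t) > 0 for every t ∈ {0,…,d−1}, and assume Prec_seq(S) ≥ 1 − δ (which forces Q_S(F_t) > 0 for every t, since V = F_d ⊆ F_t). Define α_t = Q_S(F_t)/Q_S(F_{t−1}) and β_t = U_V(E_t)/U_V(E_{t−1}) for t ∈ {1,…,d}. Suppose there is a set H ⊆ {1,…,d} with |H| ≥ m such that for every t ∈ H, α_t ≥ e^{−η} implies β_t ≤ e^{−ρ}. Then Rec_seq(S) ≤ exp(−ρ · max(0, m − ln(1/(1−δ))/η)). -/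
/-! Both `k ↦ Q_S(F_k)` and `k ↦ U_V(E_k)` are nonincreasing, so each telescopes into a product
of ratios `α_t`, resp. `β_t`, lying in `[0, 1]`. As `Q_S(F_0) ≤ 1` and `Q_S(F_d) ≥ Q_S(V) ≥ 1 - δ`,
the `α_t` multiply to at least `1 - δ`, so at most `log (1/(1-δ)) / η` of them drop below `e^{-η}`.
Every other hard step has `β_t ≤ e^{-ρ}`, and `U_V(E_d) ≤ ∏ β_t`. -/

open Finset

open scoped Classical

lemma prefixOf_snoc_castSucc {𝒱 : Type*} {n : ℕ} (y : Fin n → 𝒱) (w : 𝒱) (t : Fin n) :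
    prefixOf (Fin.snoc y w : Fin (n + 1) → 𝒱) t.castSucc = prefixOf y t := by
  funext i
  simp only [prefixOf, Fin.snoc, dif_pos (i.isLt.trans t.isLt)]
  rfl

lemma prefixOf_snoc_last {𝒱 : Type*} {n : ℕ} (y : Fin n → 𝒱) (w : 𝒱) :
    prefixOf (Fin.snoc y w : Fin (n + 1) → 𝒱) (Fin.last n) = y := by
  funext i
  simp only [prefixOf, Fin.snoc, dif_pos (show (i : ℕ) < n from i.isLt)]
  rfl

theorem sum_prod_prefixOf_le_one {𝒱 : Type*} [Fintype 𝒱] :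
    ∀ {d : ℕ} (g : ∀ t : Fin d, (Fin t.val → 𝒱) → 𝒱 → ℝ),
      (∀ t p w, 0 ≤ g t p w) → (∀ t p, ∑ w, g t p w ≤ 1) →
      ∑ y : Fin d → 𝒱, ∏ t, g t (prefixOf y t) (y t) ≤ 1
  | 0, _, _, _ => by simp
  | n + 1, g, hg0, hg1 => by
    have hsplit : ∀ (y : Fin n → 𝒱) (w : 𝒱),
        ∏ t, g t (prefixOf (Fin.snoc y w : Fin (n + 1) → 𝒱) t)
            ((Fin.snoc y w : Fin (n + 1) → 𝒱) t) =
          (∏ t : Fin n, g t.castSucc (prefixOf y t) (y t)) * g (Fin.last n) y w := by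
      intro y w
      simp only [Fin.prod_univ_castSucc, prefixOf_snoc_castSucc, Fin.snoc_castSucc,
        prefixOf_snoc_last, Fin.snoc_last]
    calc ∑ y : Fin (n + 1) → 𝒱, ∏ t, g t (prefixOf y t) (y t)
        = ∑ y : Fin n → 𝒱, (∏ t : Fin n, g t.castSucc (prefixOf y t) (y t)) *
            ∑ w, g (Fin.last n) y w := by
          rw [← (Fin.snocEquiv fun _ => 𝒱).sum_comp, Fintype.sum_prod_type_right]
          exact sum_congr rfl fun y _ => by
            simp only [mul_sum]
            exact sum_congr rfl fun w _ => hsplit y w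
      _ ≤ ∑ y : Fin n → 𝒱, ∏ t : Fin n, g t.castSucc (prefixOf y t) (y t) :=
          sum_le_sum fun y _ => mul_le_of_le_one_right
            (prod_nonneg fun t _ => hg0 _ _ _) (hg1 _ _)
      _ ≤ 1 := sum_prod_prefixOf_le_one (fun t => g t.castSucc) (fun t => hg0 t.castSucc)
          (fun t => hg1 t.castSucc)

section Compounding

open Real

variable {ι : Type*} [Fintype ι] {a b : ι → ℝ} {c η ρ : ℝ}

lemma card_le_log_div_of_le_prod (ha0 : ∀ i, 0 ≤ a i) (ha1 : ∀ i, a i ≤ 1) (hc : 0 < c)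
    (hη : 0 < η) (hca : c ≤ ∏ i, a i) {B : Finset ι} (hB : ∀ i ∈ B, a i ≤ exp (-η)) :
    (#B : ℝ) ≤ log (1 / c) / η := by
  have hexp : c ≤ exp (#B * -η) := calc
    c ≤ ∏ i, a i := hca
    _ ≤ ∏ i ∈ B, a i :=
      prod_le_prod_of_subset_of_le_one B.subset_univ (fun i _ => ha0 i) (fun i _ _ => ha1 i)
    _ ≤ ∏ _i ∈ B, exp (-η) := prod_le_prod (fun i _ => ha0 i) hB
    _ = exp (#B * -η) := by rw [prod_const, exp_nat_mul]
  have hlog := (log_le_iff_le_exp hc).mpr hexp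
  rw [one_div, log_inv, le_div_iff₀ hη]
  linarith

lemma prod_le_exp_of_hard (ha0 : ∀ i, 0 ≤ a i) (ha1 : ∀ i, a i ≤ 1) (hb0 : ∀ i, 0 ≤ b i)
    (hb1 : ∀ i, b i ≤ 1) (hc : 0 < c) (hη : 0 < η) (hρ : 0 ≤ ρ) (hca : c ≤ ∏ i, a i)
    {H : Finset ι} {m : ℕ} (hm : m ≤ #H) (hhard : ∀ i ∈ H, exp (-η) ≤ a i → b i ≤ exp (-ρ)) :
    ∏ i, b i ≤ exp (-ρ * max 0 (m - log (1 / c) / η)) := by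
  let A := H.filter fun i => exp (-η) ≤ a i
  let B := H.filter fun i => ¬exp (-η) ≤ a i
  have hAB : (#A : ℝ) + #B = #H := by exact_mod_cast card_filter_add_card_filter_not _
  have hB : (#B : ℝ) ≤ log (1 / c) / η :=
    card_le_log_div_of_le_prod ha0 ha1 hc hη hca fun i hi => (not_le.mp (mem_filter.mp hi).2).le
  have hmA : max 0 (m - log (1 / c) / η) ≤ #A := by
    have : (m : ℝ) ≤ #H := by exact_mod_cast hm
    exact max_le (Nat.cast_nonneg _) (by linarith)
  calc ∏ i, b i
      ≤ ∏ i ∈ A, b i :=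
        prod_le_prod_of_subset_of_le_one A.subset_univ (fun i _ => hb0 i) (fun i _ _ => hb1 i)
    _ ≤ ∏ _i ∈ A, exp (-ρ) :=
        prod_le_prod (fun i _ => hb0 i) fun i hi =>
          hhard i (mem_filter.mp hi).1 (mem_filter.mp hi).2
    _ = exp (#A * -ρ) := by rw [prod_const, exp_nat_mul]
    _ ≤ exp (-ρ * max 0 (m - log (1 / c) / η)) := by
        rw [exp_le_exp]
        nlinarith

end Compounding

section Telescoping

open Real

variable {f g : ℕ → ℝ} {n : ℕ}

lemma mul_prod_range_div_eq (hf : ∀ k < n, f k ≠ 0) :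
    f 0 * ∏ k ∈ range n, f (k + 1) / f k = f n := by
  induction n with
  | zero => simp
  | succ n ih =>
    rw [prod_range_succ, ← mul_assoc, ih fun k hk => hf k (hk.trans n.lt_succ_self)]
    field_simp [hf n n.lt_succ_self]

lemma Antitone.div_succ_nonneg (hf : Antitone f) {k : ℕ} (hk : 0 ≤ f (k + 1)) :
    0 ≤ f (k + 1) / f k :=
  div_nonneg hk (hk.trans (hf k.le_succ))

lemma Antitone.div_succ_le_one (hf : Antitone f) {k : ℕ} (hk : 0 ≤ f k) :
    f (k + 1) / f k ≤ 1 :=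
  div_le_one_of_le₀ (hf k.le_succ) hk

lemma Antitone.le_prod_div_succ (hf : Antitone f) (h0 : f 0 ≤ 1) (hn : 0 ≤ f n)
    (hpos : ∀ k < n, 0 < f k) : f n ≤ ∏ t : Fin n, f (t + 1) / f t := by
  rw [Fin.prod_univ_eq_prod_range (fun k => f (k + 1) / f k)]
  conv_lhs => rw [← mul_prod_range_div_eq fun k hk => (hpos k hk).ne']
  refine mul_le_of_le_one_left (prod_nonneg fun k hk => hf.div_succ_nonneg ?_) h0
  exact hn.trans (hf (mem_range.mp hk))

theorem le_exp_of_hard_steps {c η ρ : ℝ} (hf : Antitone f) (hf0 : f 0 ≤ 1) (hc : 0 < c)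
    (hcf : c ≤ f n) (hg : Antitone g) (hg0 : g 0 ≤ 1) (hgn : 0 ≤ g n)
    (hgpos : ∀ k < n, 0 < g k) (hη : 0 < η) (hρ : 0 ≤ ρ) {H : Finset (Fin n)} {m : ℕ}
    (hm : m ≤ #H) (hhard : ∀ t ∈ H, exp (-η) ≤ f (t + 1) / f t →
      g (t + 1) / g t ≤ exp (-ρ)) :
    g n ≤ exp (-ρ * max 0 (m - log (1 / c) / η)) := by
  have hfn : 0 ≤ f n := hc.le.trans hcf
  have hfpos : ∀ k ≤ n, 0 < f k := fun k hk => hc.trans_le (hcf.trans (hf hk))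
  calc g n ≤ ∏ t : Fin n, g (t + 1) / g t := hg.le_prod_div_succ hg0 hgn hgpos
    _ ≤ _ := prod_le_exp_of_hard (a := fun t : Fin n => f (t + 1) / f t)
      (fun t => hf.div_succ_nonneg (hfn.trans (hf t.isLt)))
      (fun t => hf.div_succ_le_one (hfpos t t.isLt.le).le)
      (fun t => hg.div_succ_nonneg (hgn.trans (hg t.isLt)))
      (fun t => hg.div_succ_le_one (hgpos t t.isLt).le)
      hc hη hρ (hcf.trans (hf.le_prod_div_succ hf0 hfn fun k hk => hfpos k hk.le)) hm hhard

end Telescoping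

section Decoding

variable {𝒱 : Type*} [Fintype 𝒱] {d : ℕ}

lemma QS_nonneg (S : ∀ t : Fin d, (Fin t.val → 𝒱) → Finset 𝒱) (y : Fin d → 𝒱) : 0 ≤ QS S y :=
  prod_nonneg fun _ _ => by split_ifs <;> positivity

/-- An empty `S t p` carries mass `0`, so `Q_S` is in general only a sub-probability. -/
lemma sum_QS_le_one (S : ∀ t : Fin d, (Fin t.val → 𝒱) → Finset 𝒱) (A : Finset (Fin d → 𝒱)) :
    ∑ y ∈ A, QS S y ≤ 1 := by
  refine (sum_le_sum_of_subset_of_nonneg A.subset_univ fun y _ _ => QS_nonneg S y).trans ?_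
  refine sum_prod_prefixOf_le_one (fun t p w => if w ∈ S t p then (1 : ℝ) / #(S t p) else 0)
    (fun _ _ _ => by split_ifs <;> positivity) fun t p => ?_
  rw [sum_ite_mem, univ_inter, sum_const, nsmul_eq_mul, mul_one_div]
  exact div_self_le_one _

lemma subset_Fevent (V : Finset (Fin d → 𝒱)) (k : ℕ) : V ⊆ Fevent V k := fun y hy =>
  mem_filter.mpr ⟨mem_univ y, fun _ _ => mem_filter.mpr ⟨mem_univ _, y, hy, rfl, rfl⟩⟩

lemma antitone_Fevent (V : Finset (Fin d → 𝒱)) : Antitone (Fevent V) := fun _ _ hkl y hy =>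
  mem_filter.mpr ⟨mem_univ y, fun t ht => (mem_filter.mp hy).2 t (ht.trans_le hkl)⟩

lemma antitone_Eevent (S : ∀ t : Fin d, (Fin t.val → 𝒱) → Finset 𝒱) :
    Antitone (Eevent S) := fun _ _ hkl y hy =>
  mem_filter.mpr ⟨mem_univ y, fun t ht => (mem_filter.mp hy).2 t (ht.trans_le hkl)⟩

lemma UV_nonneg (V A : Finset (Fin d → 𝒱)) : 0 ≤ UV V A := by
  unfold UV
  positivity

lemma UV_le_one (V A : Finset (Fin d → 𝒱)) : UV V A ≤ 1 :=
  div_le_one_of_le₀ (by exact_mod_cast card_le_card inter_subset_left) (Nat.cast_nonneg _)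

lemma UV_mono (V : Finset (Fin d → 𝒱)) {A B : Finset (Fin d → 𝒱)} (h : A ⊆ B) :
    UV V A ≤ UV V B :=
  div_le_div_of_nonneg_right (by exact_mod_cast card_le_card (inter_subset_inter_left h))
    (Nat.cast_nonneg _)

end Decoding

theorem compounding_hard_steps_general {𝒱 : Type*} [Fintype 𝒱]
    {d : ℕ}
    (V : Finset (Fin d → 𝒱))
    (S : ∀ t : Fin d, (Fin t.val → 𝒱) → Finset 𝒱)
    (δ η ρ : ℝ) (hδ : 0 < δ ∧ δ < 1) (hη : 0 < η) (hρ : 0 < ρ) (m : ℕ)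
    (hposE : ∀ t : Fin d, 0 < UV V (Eevent S t.val))
    (hprec : 1 - δ ≤ ∑ y ∈ V, QS S y)
    (Hard : Finset (Fin d)) (hm : m ≤ Hard.card)
    (hhard : ∀ t ∈ Hard,
      Real.exp (-η) ≤
          (∑ y ∈ Fevent V (t.val + 1), QS S y) / (∑ y ∈ Fevent V t.val, QS S y) →
      UV V (Eevent S (t.val + 1)) / UV V (Eevent S t.val) ≤ Real.exp (-ρ)) :
    UV V (Eevent S d) ≤
      Real.exp (-ρ * max 0 ((m : ℝ) - Real.log (1 / (1 - δ)) / η)) := by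
  have hQF : Antitone fun k => ∑ y ∈ Fevent V k, QS S y := fun _ _ hkl =>
    sum_le_sum_of_subset_of_nonneg (antitone_Fevent V hkl) fun y _ _ => QS_nonneg S y
  have hUE : Antitone fun k => UV V (Eevent S k) := fun _ _ hkl =>
    UV_mono V (antitone_Eevent S hkl)
  have hprecF : 1 - δ ≤ ∑ y ∈ Fevent V d, QS S y :=
    hprec.trans (sum_le_sum_of_subset_of_nonneg (subset_Fevent V d) fun y _ _ => QS_nonneg S y)
  exact le_exp_of_hard_steps hQF (sum_QS_le_one S _) (by linarith [hδ.2]) hprecF hUE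
    (UV_le_one V _) (UV_nonneg V _) (fun k hk => hposE ⟨k, hk⟩) hη hρ.le hm hhard

/-- Compounding effect of hard decoding steps: if `Prec_seq(S) = Q_S(V) ≥ 1 − δ`, the
events `E_t` have positive `U_V`-mass, and at least `m` steps `t` are hard — meaning
`α_t = Q_S(F_t)/Q_S(F_{t−1}) ≥ e^{−η}` forces `β_t = U_V(E_t)/U_V(E_{t−1}) ≤ e^{−ρ}` —
then `Rec_seq(S) = U_V(E_d) ≤ exp(−ρ·max(0, m − ln(1/(1−δ))/η))`. -/
theorem compounding_hard_steps {𝒱 : Type*} [Fintype 𝒱] [Nonempty 𝒱]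
    {d : ℕ} (hd : 1 ≤ d)
    (V : Finset (Fin d → 𝒱)) (hV : V.Nonempty)
    (S : ∀ t : Fin d, (Fin t.val → 𝒱) → Finset 𝒱)
    (hS : ∀ (t : Fin d) (p : Fin t.val → 𝒱), (S t p).Nonempty)
    (δ η ρ : ℝ) (hδ : 0 < δ ∧ δ < 1) (hη : 0 < η) (hρ : 0 < ρ) (m : ℕ)
    (hposE : ∀ t : Fin d, 0 < UV V (Eevent S t.val))
    (hprec : 1 - δ ≤ ∑ y ∈ V, QS S y)
    (Hard : Finset (Fin d)) (hm : m ≤ Hard.card)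
    (hhard : ∀ t ∈ Hard,
      Real.exp (-η) ≤
          (∑ y ∈ Fevent V (t.val + 1), QS S y) / (∑ y ∈ Fevent V t.val, QS S y) →
      UV V (Eevent S (t.val + 1)) / UV V (Eevent S t.val) ≤ Real.exp (-ρ)) :
    UV V (Eevent S d) ≤
      Real.exp (-ρ * max 0 ((m : ℝ) - Real.log (1 / (1 - δ)) / η)) :=
  compounding_hard_steps_general V S δ η ρ hδ hη hρ m hposE hprec Hard hm hhard
end
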